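/- Let Y be a simplicial set and G a group acting on Y by automorphisms of simplicial sets such that for every n ≥ 0 the action of G on the set Y_n is free. Then the levelwise quotient simplicial set G\Y, with (G\Y)_n = G\Y_n and induced simplicial operations, is 2-Segal if and only if Y is 2-Segal. -/

import Mathlib

/-!
Since `G` acts freely, two simplices of `Y` in the same orbit that share a face are equal.
Hence, for any commuting square of restriction maps, the comparison map `Y_n → Y_a ×_{Y_e} Y_b`
is bijective iff the one for `G\Y` is: an orbit representative can be moved by `G` so that one of
its two faces is a prescribed simplex, and the other one is then forced by their common face.
The 2-Segal maps are comparison maps of this kind.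
-/

open CategoryTheory Simplicial

universe u

namespace Seg

/-- Restriction of a simplex along a monotone map of standard simplices. -/
def res (X : SSet.{u}) {m n : ℕ} (f : Fin (m + 1) →o Fin (n + 1)) : X _⦋n⦌ → X _⦋m⦌ :=
  X.map (SimplexCategory.mkHom f).op

/-- The monotone injection `[l] → [n]`, `k ↦ i + k`, i.e. the inclusion of the
interval `{i, i+1, …, i+l}` into `{0, …, n}`. -/
def interval {n : ℕ} (i l : ℕ) (h : i + l ≤ n) : Fin (l + 1) →o Fin (n + 1) where
  toFun k := ⟨i + k.1, by have := k.isLt; omega⟩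
  monotone' := by
    intro a b hab
    have h' : a.1 ≤ b.1 := hab
    simp only [Fin.mk_le_mk]
    omega

/-- The monotone injection with image `{0,…,i} ∪ {j,…,n}` (where `i < j ≤ n`). -/
def outer {n : ℕ} (i j : ℕ) (hij : i < j) (hj : j ≤ n) :
    Fin (n - (j - i) + 2) →o Fin (n + 1) where
  toFun k := ⟨if k.1 ≤ i then k.1 else k.1 + (j - i) - 1, by have := k.isLt; split <;> omega⟩
  monotone' := by
    intro a b hab
    have h' : a.1 ≤ b.1 := hab
    have ha := a.isLt
    have hb := b.isLt
    simp only [Fin.mk_le_mk]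
    split_ifs <;> omega

/-- The monotone map `[1] → [l]` sending `0 ↦ 0` and `1 ↦ l`. -/
def ends (l : ℕ) : Fin 2 →o Fin (l + 1) where
  toFun k := ⟨k.1 * l, by
    have hk : k.1 ≤ 1 := Nat.lt_succ_iff.mp k.isLt
    have h2 : k.1 * l ≤ 1 * l := Nat.mul_le_mul hk (le_refl l)
    omega⟩
  monotone' := by
    intro a b hab
    have h' : a.1 ≤ b.1 := hab
    simp only [Fin.mk_le_mk]
    exact Nat.mul_le_mul h' (le_refl l)

/-- The map `[0] → [n]` picking out the vertex `i`. -/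
def vert {n : ℕ} (i : ℕ) (h : i ≤ n) : Fin 1 →o Fin (n + 1) where
  toFun _ := ⟨i, by omega⟩
  monotone' := fun _ _ _ => le_refl _

/-- The monotone surjection `[m+1] → [m]` hitting `i` twice; restriction along it is the
degeneracy `s_i : X_m → X_{m+1}`. -/
def degen {m : ℕ} (i : ℕ) (h : i ≤ m) : Fin (m + 2) →o Fin (m + 1) where
  toFun k := ⟨if k.1 ≤ i then k.1 else k.1 - 1, by have := k.isLt; split <;> omega⟩
  monotone' := by
    intro a b hab
    have h' : a.1 ≤ b.1 := hab
    simp only [Fin.mk_le_mk]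
    split_ifs <;> omega

/-- The 2-Segal map associated to `0 ≤ i < j ≤ n`, i.e. the canonical map
`X_n → X_{{0,…,i}∪{j,…,n}} ×_{X_{{i,j}}} X_{{i,…,j}}`, is a bijection.  (A map into a
fiber product of sets is a bijection iff every compatible pair has a unique preimage.) -/
def TwoSegalMapBij (X : SSet.{u}) (n i j : ℕ) (hij : i < j) (hj : j ≤ n) : Prop :=
  ∀ (a : X _⦋n - (j - i) + 1⦌) (b : X _⦋j - i⦌),
    res X (interval i 1 (by omega)) a = res X (ends (j - i)) b →
    ∃! x : X _⦋n⦌,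
      res X (outer i j hij hj) x = a ∧ res X (interval i (j - i) (by omega)) x = b

/-- A simplicial set is 2-Segal if all the 2-Segal maps are bijections. -/
def IsTwoSegal (X : SSet.{u}) : Prop :=
  ∀ (n i j : ℕ), 3 ≤ n → ∀ (hij : i < j) (hj : j ≤ n), TwoSegalMapBij X n i j hij hj

/-- A simplicial set is Segal (1-Segal) if for each `n ≥ 2` the map
`X_n → X_1 ×_{X_0} ⋯ ×_{X_0} X_1` (restriction to the edges `{k,k+1}`) is a bijection. -/
def IsSegal (X : SSet.{u}) : Prop :=
  ∀ (n : ℕ), 2 ≤ n → ∀ e : Fin n → X _⦋1⦌,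
    (∀ (k : ℕ) (hk : k + 1 < n),
      res X (vert 1 (le_refl 1)) (e ⟨k, by omega⟩) =
        res X (vert 0 (Nat.zero_le 1)) (e ⟨k + 1, hk⟩)) →
    ∃! x : X _⦋n⦌, ∀ k : Fin n, res X (interval k.1 1 (by have := k.isLt; omega)) x = e k

end Seg

namespace Seg

/-- An action of a group `G` on a simplicial set `Y` by automorphisms of simplicial sets:
a levelwise action commuting with all simplicial operations. -/
structure SAction (G : Type u) [Group G] (Y : SSet.{u}) where
  smul : ∀ n : SimplexCategoryᵒᵖ, G → Y.obj n → Y.obj n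
  one_smul : ∀ (n : SimplexCategoryᵒᵖ) (x : Y.obj n), smul n 1 x = x
  mul_smul : ∀ (n : SimplexCategoryᵒᵖ) (g h : G) (x : Y.obj n),
    smul n (g * h) x = smul n g (smul n h x)
  map_smul : ∀ {n m : SimplexCategoryᵒᵖ} (f : n ⟶ m) (g : G) (x : Y.obj n),
    Y.map f (smul n g x) = smul m g (Y.map f x)

variable {G : Type u} [Group G] {Y : SSet.{u}}

/-- The orbit equivalence relation on each level. -/
def SAction.setoid (A : SAction G Y) (n : SimplexCategoryᵒᵖ) : Setoid (Y.obj n) where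
  r x y := ∃ g : G, A.smul n g x = y
  iseqv := by
    constructor
    · intro x
      exact ⟨1, A.one_smul n x⟩
    · intro x y h
      obtain ⟨g, hg⟩ := h
      exact ⟨g⁻¹, by rw [← hg, ← A.mul_smul, inv_mul_cancel, A.one_smul]⟩
    · intro x y z h₁ h₂
      obtain ⟨g, hg⟩ := h₁
      obtain ⟨h, hh⟩ := h₂
      exact ⟨h * g, by rw [A.mul_smul, hg, hh]⟩

/-- The levelwise quotient simplicial set `G\Y`. -/
def quotSSet (A : SAction G Y) : SSet.{u} where
  obj n := Quotient (A.setoid n)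
  map {n m} g := TypeCat.ofHom (Quotient.map' (Y.map g) (fun x y (hxy : (A.setoid n) x y) => by
    obtain ⟨gg, hg⟩ := hxy
    exact ⟨gg, by rw [← hg, A.map_smul]⟩))
  map_id n := by
    ext q
    induction q using Quotient.inductionOn' with
    | h x =>
      simp [Quotient.map'_mk'']
  map_comp f g := by
    ext q
    induction q using Quotient.inductionOn' with
    | h x =>
      simp [Quotient.map'_mk'']

def SAction.IsFree (A : SAction G Y) : Prop :=
  ∀ (n : SimplexCategoryᵒᵖ) (g : G) (x : Y.obj n), A.smul n g x = x → g = 1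

def PullbackMapBij (X : SSet.{u}) {n a b e : ℕ} (f : Fin (a + 1) →o Fin (n + 1))
    (g : Fin (b + 1) →o Fin (n + 1)) (p : Fin (e + 1) →o Fin (a + 1))
    (q : Fin (e + 1) →o Fin (b + 1)) : Prop :=
  ∀ (x : X _⦋a⦌) (y : X _⦋b⦌), res X p x = res X q y →
    ∃! z : X _⦋n⦌, res X f z = x ∧ res X g z = y

lemma res_res (X : SSet.{u}) {k m n : ℕ} (f : Fin (m + 1) →o Fin (k + 1))
    (g : Fin (k + 1) →o Fin (n + 1)) (x : X _⦋n⦌) :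
    res X f (res X g x) = res X (g.comp f) x := by
  simp only [res, ← Functor.map_comp_apply]
  rfl

lemma res_res_eq_of_comp_eq (X : SSet.{u}) {n a b e : ℕ} {f : Fin (a + 1) →o Fin (n + 1)}
    {g : Fin (b + 1) →o Fin (n + 1)} {p : Fin (e + 1) →o Fin (a + 1)}
    {q : Fin (e + 1) →o Fin (b + 1)} (hsq : f.comp p = g.comp q) (z : X _⦋n⦌) :
    res X p (res X f z) = res X q (res X g z) := by
  rw [res_res, res_res, hsq]

lemma outer_comp_interval (n i j : ℕ) (hij : i < j) (hj : j ≤ n)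
    (h₁ : i + 1 ≤ n - (j - i) + 1) (h₂ : i + (j - i) ≤ n) :
    (outer i j hij hj).comp (interval i 1 h₁) = (interval i (j - i) h₂).comp (ends (j - i)) := by
  ext k
  fin_cases k <;>
    simp only [OrderHom.comp_coe, Function.comp_apply, outer, interval, ends] <;> simp [DFunLike.coe]

lemma twoSegalMapBij_iff (X : SSet.{u}) (n i j : ℕ) (hij : i < j) (hj : j ≤ n) :
    TwoSegalMapBij X n i j hij hj ↔ PullbackMapBij X (outer i j hij hj)
      (interval i (j - i) (by omega)) (interval i 1 (by omega)) (ends (j - i)) :=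
  Iff.rfl

namespace SAction

variable (A : SAction G Y)

lemma res_smul {m n : ℕ} (f : Fin (m + 1) →o Fin (n + 1)) (g : G) (x : Y _⦋n⦌) :
    res Y f (A.smul _ g x) = A.smul _ g (res Y f x) :=
  A.map_smul _ g x

lemma res_mk {m n : ℕ} (f : Fin (m + 1) →o Fin (n + 1)) (x : Y _⦋n⦌) :
    res (quotSSet A) f (Quotient.mk'' x) = Quotient.mk'' (res Y f x) :=
  rfl

lemma mk_eq_mk_iff {n : SimplexCategoryᵒᵖ} {x y : Y.obj n} :
    (Quotient.mk'' x : Quotient (A.setoid n)) = Quotient.mk'' y ↔ ∃ g : G, A.smul n g x = y :=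
  Quotient.eq''

lemma mk_smul {n : SimplexCategoryᵒᵖ} (g : G) (x : Y.obj n) :
    (Quotient.mk'' (A.smul n g x) : Quotient (A.setoid n)) = Quotient.mk'' x :=
  Quotient.sound' ⟨g⁻¹, by rw [← A.mul_smul, inv_mul_cancel, A.one_smul]⟩

variable {A}

lemma exists_res_smul_eq {m n : ℕ} {f : Fin (m + 1) →o Fin (n + 1)} {x : Y _⦋n⦌}
    {y : Y _⦋m⦌} (h : res (quotSSet A) f (Quotient.mk'' x) = Quotient.mk'' y) :
    ∃ g : G, res Y f (A.smul _ g x) = y := by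
  obtain ⟨g, hg⟩ := A.mk_eq_mk_iff.mp h
  exact ⟨g, (res_smul A f g x).trans hg⟩

lemma IsFree.eq_of_mk_eq_of_res_eq (hA : A.IsFree) {m n : ℕ} {f : Fin (m + 1) →o Fin (n + 1)}
    {x y : Y _⦋n⦌} (hxy : (Quotient.mk'' x : Quotient (A.setoid _)) = Quotient.mk'' y)
    (hf : res Y f x = res Y f y) : x = y := by
  obtain ⟨g, rfl⟩ := A.mk_eq_mk_iff.mp hxy
  have hg : g = 1 := hA _ g (res Y f x) (by rw [← res_smul, hf])
  rw [hg, A.one_smul]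

end SAction

section Pullback

variable {A : SAction G Y} {n a b e : ℕ} {f : Fin (a + 1) →o Fin (n + 1)}
  {g : Fin (b + 1) →o Fin (n + 1)} {p : Fin (e + 1) →o Fin (a + 1)}
  {q : Fin (e + 1) →o Fin (b + 1)}

open SAction

lemma PullbackMapBij.of_quotSSet (hA : A.IsFree) (hsq : f.comp p = g.comp q)
    (h : PullbackMapBij (quotSSet A) f g p q) : PullbackMapBij Y f g p q := by
  intro x y hxy
  obtain ⟨z', ⟨hz₁, hz₂⟩, huniq⟩ :=
    h (Quotient.mk'' x) (Quotient.mk'' y) (by rw [res_mk, res_mk, hxy])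
  obtain ⟨z, rfl⟩ := Quotient.mk''_surjective z'
  obtain ⟨k, hk⟩ := exists_res_smul_eq hz₁
  have hgz : res Y g (A.smul _ k z) = y :=
    hA.eq_of_mk_eq_of_res_eq (f := q) (by rw [res_smul, mk_smul, ← res_mk, hz₂])
      (by rw [← res_res_eq_of_comp_eq Y hsq, hk, hxy])
  refine ⟨A.smul _ k z, ⟨hk, hgz⟩, fun w ⟨hw₁, hw₂⟩ => ?_⟩
  refine hA.eq_of_mk_eq_of_res_eq (f := f) ?_ (hw₁.trans hk.symm)
  rw [mk_smul]
  exact huniq _ ⟨by rw [res_mk, hw₁], by rw [res_mk, hw₂]⟩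

lemma PullbackMapBij.quotSSet (hA : A.IsFree) (hsq : f.comp p = g.comp q)
    (h : PullbackMapBij Y f g p q) : PullbackMapBij (quotSSet A) f g p q := by
  intro x' y' hxy
  obtain ⟨x, rfl⟩ := Quotient.mk''_surjective x'
  obtain ⟨y, rfl⟩ := Quotient.mk''_surjective y'
  obtain ⟨k, hk⟩ := exists_res_smul_eq hxy.symm
  obtain ⟨z, ⟨hz₁, hz₂⟩, huniq⟩ := h x (A.smul _ k y) hk.symm
  refine ⟨Quotient.mk'' z, ⟨by rw [res_mk, hz₁], by rw [res_mk, hz₂, mk_smul]⟩, ?_⟩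
  rintro w' ⟨hw₁, hw₂⟩
  obtain ⟨w, rfl⟩ := Quotient.mk''_surjective w'
  obtain ⟨l, hl⟩ := exists_res_smul_eq hw₁
  have hgw : res Y g (A.smul _ l w) = A.smul _ k y :=
    hA.eq_of_mk_eq_of_res_eq (f := q) (by rw [res_smul, mk_smul, mk_smul, ← res_mk, hw₂])
      (by rw [← res_res_eq_of_comp_eq Y hsq, hl]; exact hk.symm)
  rw [← A.mk_smul l w, huniq _ ⟨hl, hgw⟩]

lemma pullbackMapBij_quotSSet_iff (hA : A.IsFree) (hsq : f.comp p = g.comp q) :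
    PullbackMapBij (quotSSet A) f g p q ↔ PullbackMapBij Y f g p q :=
  ⟨.of_quotSSet hA hsq, .quotSSet hA hsq⟩

end Pullback

/-- If a group `G` acts on a simplicial set `Y` by simplicial automorphisms, freely on each
level, then the quotient `G\Y` is 2-Segal iff `Y` is 2-Segal. -/
theorem quot_isTwoSegal_iff (A : SAction G Y)
    (hfree : ∀ (n : SimplexCategoryᵒᵖ) (g : G) (x : Y.obj n), A.smul n g x = x → g = 1) :
    IsTwoSegal (quotSSet A) ↔ IsTwoSegal Y := by
  refine forall₃_congr fun n i j => forall_congr' fun _ => forall₂_congr fun hij hj => ?_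
  rw [twoSegalMapBij_iff, twoSegalMapBij_iff]
  exact pullbackMapBij_quotSSet_iff hfree (outer_comp_interval n i j hij hj _ _)

end Seg
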